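/- arXiv:2406.02757 — 3 statements merged into one kernel-verified Lean document; each statement's English description precedes it below -/
import Mathlib

section
/- Let d ≥ 2 be an integer and ε ∈ (0,1). Then Ñ(ε,d) ≤ 8·e·d·(ln(ln(e/ε)) + ln(2d))/ε, i.e., there exists a set P ⊆ [0,1]^d of cardinality at most 8·e·d·(ln(ln(e/ε)) + ln(2d))/ε such that every periodic axis-parallel box in the torus [0,1]^d of volume at least ε contains a point of P. -/
open MeasureTheory Real Set ProbabilityTheory

noncomputable section

/-- The unit cube `[0,1]^d`. -/
def cube (d : ℕ) : Set (Fin d → ℝ) := Set.univ.pi fun _ => Set.Icc 0 1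

/-- Axis-parallel boxes `∏ [aᵢ, bᵢ)` with `0 ≤ aᵢ ≤ bᵢ ≤ 1`. -/
def IsBox {d : ℕ} (B : Set (Fin d → ℝ)) : Prop :=
  ∃ a b : Fin d → ℝ, (∀ i, 0 ≤ a i ∧ a i ≤ b i ∧ b i ≤ 1) ∧
    B = Set.univ.pi fun i => Set.Ico (a i) (b i)

/-- Periodic axis-parallel boxes on the torus: in each coordinate the factor is
`(aᵢ, bᵢ)` if `aᵢ < bᵢ`, and `[0,1] \ [bᵢ, aᵢ]` if `bᵢ < aᵢ`. -/
def IsPeriodicBox {d : ℕ} (B : Set (Fin d → ℝ)) : Prop :=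
  ∃ a b : Fin d → ℝ, a ∈ cube d ∧ b ∈ cube d ∧ (∀ i, a i ≠ b i) ∧
    B = Set.univ.pi fun i =>
      if a i < b i then Set.Ioo (a i) (b i) else Set.Icc 0 1 \ Set.Icc (b i) (a i)

/-- `d`-dimensional Lebesgue volume, as a real number. -/
def vol {d : ℕ} (B : Set (Fin d → ℝ)) : ℝ := (MeasureTheory.volume B).toReal

/-- Dispersion of a point set: supremum of volumes of boxes avoiding `P`. -/
def disp {d : ℕ} (P : Set (Fin d → ℝ)) : ℝ :=
  sSup {v | ∃ B : Set (Fin d → ℝ), IsBox B ∧ B ∩ P = ∅ ∧ v = vol B}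

/-- Periodic (torus) dispersion of a point set. -/
def pdisp {d : ℕ} (P : Set (Fin d → ℝ)) : ℝ :=
  sSup {v | ∃ B : Set (Fin d → ℝ), IsPeriodicBox B ∧ B ∩ P = ∅ ∧ v = vol B}

/-- Minimal dispersion `disp*(n,d)`. -/
def dispStar (n d : ℕ) : ℝ :=
  sInf {v | ∃ P : Finset (Fin d → ℝ), ↑P ⊆ cube d ∧ P.card = n ∧ v = disp (↑P : Set (Fin d → ℝ))}

/-- Minimal periodic dispersion `disp̃*(n,d)`. -/
def pdispStar (n d : ℕ) : ℝ :=
  sInf {v | ∃ P : Finset (Fin d → ℝ), ↑P ⊆ cube d ∧ P.card = n ∧ v = pdisp (↑P : Set (Fin d → ℝ))}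

/-- Inverse of the minimal dispersion, `N(ε,d)`. -/
def invDisp (ε : ℝ) (d : ℕ) : ℕ := sInf {n : ℕ | 0 < n ∧ dispStar n d ≤ ε}

/-- A `δ`-approximation of the family of boxes of volume at least `ε`. -/
def DeltaApprox {d : ℕ} (δ ε : ℝ) (𝒩 : Set (Set (Fin d → ℝ))) : Prop :=
  (∀ A ∈ 𝒩, IsBox A) ∧
  ∀ B : Set (Fin d → ℝ), IsBox B → ε ≤ vol B → ∃ B₀ ∈ 𝒩, B₀ ⊆ B ∧ δ ≤ vol B₀

/-- A `δ`-approximation of the family of periodic boxes of volume at least `ε`. -/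
def PeriodicDeltaApprox {d : ℕ} (δ ε : ℝ) (𝒩 : Set (Set (Fin d → ℝ))) : Prop :=
  (∀ A ∈ 𝒩, IsPeriodicBox A) ∧
  ∀ B : Set (Fin d → ℝ), IsPeriodicBox B → ε ≤ vol B → ∃ B₀ ∈ 𝒩, B₀ ⊆ B ∧ δ ≤ vol B₀

open scoped ENNReal

namespace TorusDisp

def th (d : ℕ) : ℝ := 1 - 1/(2*d)

def tIco (a s : ℝ) : Set ℝ := Set.Ico a (min (a+s) 1) ∪ Set.Ico 0 (a+s-1)

def posCount (d m : ℕ) : ℕ := ⌈(2*d : ℝ)/(th d)^m⌉₊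

def npos (d m j : ℕ) : ℝ := j * ((th d)^m/(2*d))

variable {d : ℕ}

lemma th_lt_one (hd : 1 ≤ d) : th d < 1 := by
  have : (0:ℝ) < 2*d := by positivity
  have : (0:ℝ) < 1/(2*d) := by positivity
  simp only [th]; linarith

lemma th_ge (hd : 2 ≤ d) : 3/4 ≤ th d := by
  have hd' : (2:ℝ) ≤ d := by exact_mod_cast hd
  have h1 : (1:ℝ)/(2*d) ≤ 1/4 := by
    apply div_le_div_of_nonneg_left <;> linarith
  simp only [th]; linarith

lemma th_pos (hd : 2 ≤ d) : 0 < th d := by linarith [th_ge hd]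

lemma th_pow_le_one (hd : 2 ≤ d) (m : ℕ) : (th d)^m ≤ 1 :=
  pow_le_one₀ (le_of_lt (th_pos hd)) (le_of_lt (th_lt_one (by omega)))

lemma th_pow_pos (hd : 2 ≤ d) (m : ℕ) : 0 < (th d)^m := pow_pos (th_pos hd) m

/-- Bernoulli: `th^d ≥ 1/2`, hence `th^(2d) ≥ 1/4`. -/
lemma th_pow_d (hd : 2 ≤ d) : (1:ℝ)/2 ≤ (th d)^d := by
  have hd0 : (0:ℝ) < d := by positivity
  have hd' : (2:ℝ) ≤ d := by exact_mod_cast hd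
  have hle : (1:ℝ)/(2*d) ≤ 1 := by
    rw [div_le_one (by positivity)]; linarith
  have h := one_add_mul_le_pow (a := -(1/(2*(d:ℝ)))) (by linarith) d
  have : 1 + (d:ℝ) * -(1/(2*d)) = 1/2 := by field_simp; ring
  rw [this] at h
  simpa [th, sub_eq_add_neg] using h

lemma th_pow_2d (hd : 2 ≤ d) : (1:ℝ)/4 ≤ ((th d)^2)^d := by
  have h := th_pow_d hd
  have h0 : (0:ℝ) ≤ (th d)^d := le_of_lt (th_pow_pos hd d)
  calc (1:ℝ)/4 = (1/2)*(1/2) := by norm_num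
    _ ≤ (th d)^d * (th d)^d := by nlinarith
    _ = ((th d)^2)^d := by rw [← pow_add, ← pow_mul, two_mul]


lemma tIco_subset_Icc {a s : ℝ} (h0 : 0 ≤ a) (ha1 : a ≤ 1) (hs1 : s ≤ 1) :
    tIco a s ⊆ Set.Icc 0 1 := by
  intro x hx
  rcases hx with hx | hx
  · exact ⟨le_trans h0 hx.1, le_of_lt (lt_of_lt_of_le hx.2 (min_le_right _ _))⟩
  · exact ⟨hx.1, by linarith [hx.2]⟩

lemma mem_tIco_self {a s : ℝ} (h1 : a < 1) (hs : 0 < s) : a ∈ tIco a s :=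
  Or.inl ⟨le_refl a, lt_min (by linarith) h1⟩

lemma tIco_measurable (a s : ℝ) : MeasurableSet (tIco a s) :=
  (measurableSet_Ico).union measurableSet_Ico

lemma volume_tIco {a s : ℝ} (h0 : 0 ≤ a) (h1 : a < 1) (hs0 : 0 < s) (hs1 : s ≤ 1) :
    volume (tIco a s) = ENNReal.ofReal s := by
  have hdisj : Disjoint (Set.Ico a (min (a+s) 1)) (Set.Ico 0 (a+s-1)) := by
    rw [Set.disjoint_left]
    rintro x ⟨hx1, _⟩ ⟨_, hx2⟩
    linarith
  rw [tIco, measure_union hdisj measurableSet_Ico, Real.volume_Ico, Real.volume_Ico]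
  rcases le_or_gt (a+s) 1 with h | h
  · rw [min_eq_left h]
    have : ENNReal.ofReal (a + s - 1 - 0) = 0 := by
      rw [ENNReal.ofReal_eq_zero]; linarith
    rw [this, add_zero]
    congr 1; ring
  · rw [min_eq_right (le_of_lt h), ← ENNReal.ofReal_add (by linarith) (by linarith)]
    congr 1; ring

/-- Positions indexed below `posCount` lie in `[0,1)`. -/
lemma npos_lt_one (hd : 2 ≤ d) {m j : ℕ} (hj : j < posCount d m) : npos d m j < 1 := by
  have hs := th_pow_pos hd m
  have hx0 : (0:ℝ) ≤ (2*d : ℝ)/(th d)^m := by positivity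
  have hceil : ((posCount d m : ℝ)) < (2*d : ℝ)/(th d)^m + 1 := by
    rw [posCount]; exact_mod_cast Nat.ceil_lt_add_one hx0
  have hjj : (j:ℝ) + 1 ≤ (posCount d m : ℝ) := by exact_mod_cast hj
  have hjlt : (j:ℝ) < (2*d : ℝ)/(th d)^m := by linarith
  have hd0 : (0:ℝ) < 2*d := by positivity
  calc npos d m j = (j:ℝ) * ((th d)^m/(2*d)) := rfl
    _ < ((2*d : ℝ)/(th d)^m) * ((th d)^m/(2*d)) := by
        apply mul_lt_mul_of_pos_right hjlt; positivity
    _ = 1 := by field_simp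

lemma npos_nonneg (d m j : ℕ) (hd : 2 ≤ d) : 0 ≤ npos d m j := by
  have := th_pow_pos hd m
  have : (0:ℝ) ≤ (th d)^m/(2*d) := by positivity
  exact mul_nonneg (Nat.cast_nonneg j) this

/-- If `j*g < 1` then `j < posCount`. -/
lemma lt_posCount_of_npos_lt_one (hd : 2 ≤ d) {m j : ℕ} (h : npos d m j < 1) :
    j < posCount d m := by
  have hs := th_pow_pos hd m
  have hd0 : (0:ℝ) < 2*d := by positivity
  rw [posCount, Nat.lt_ceil]
  have : (j:ℝ) * ((th d)^m/(2*d)) < 1 := h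
  rw [lt_div_iff₀ hs]
  calc (j:ℝ) * (th d)^m = ((j:ℝ) * ((th d)^m/(2*d))) * (2*d) := by field_simp
    _ < 1 * (2*d) := by apply mul_lt_mul_of_pos_right this hd0
    _ = 2*d := one_mul _


/-- Key per-coordinate geometric lemma. -/
lemma coord (hd : 2 ≤ d) (J : Set ℝ) (ℓ : ℝ) (hl0 : 0 < ℓ) (hl1 : ℓ ≤ 1)
    (hJ : (∃ a b : ℝ, 0 ≤ a ∧ a < b ∧ b ≤ 1 ∧ ℓ = b - a ∧ J = Set.Ioo a b) ∨
          (∃ a b : ℝ, 0 ≤ b ∧ b < a ∧ a ≤ 1 ∧ ℓ = 1 - (a - b) ∧ J = Set.Icc 0 1 \ Set.Icc b a)) :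
    ∃ m j : ℕ, (th d)^2 * ℓ < (th d)^m ∧ (th d)^m ≤ th d * ℓ ∧ j < posCount d m ∧
      tIco (npos d m j) ((th d)^m) ⊆ J := by
  have hth0 := th_pos hd
  have hth1 := th_lt_one (show 1 ≤ d by omega)
  have hd0 : (0:ℝ) < 2*d := by positivity
  have hd2 : (2:ℝ) ≤ d := by exact_mod_cast hd
  -- find the scale m
  have hex : ∃ m : ℕ, (th d)^m ≤ th d * ℓ := by
    obtain ⟨m, hm⟩ := exists_pow_lt_of_lt_one (mul_pos hth0 hl0) hth1
    exact ⟨m, le_of_lt hm⟩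
  set m := Nat.find hex with hm_def
  have hm1 : (th d)^m ≤ th d * ℓ := Nat.find_spec hex
  have hmne : m ≠ 0 := by
    intro h0
    have := hm1
    rw [h0, pow_zero] at this
    nlinarith
  have hm2 : (th d)^2 * ℓ < (th d)^m := by
    have hprev : ¬ ((th d)^(m-1) ≤ th d * ℓ) := Nat.find_min hex (by omega)
    push_neg at hprev
    have : (th d)^m = th d * (th d)^(m-1) := by
      conv_lhs => rw [show m = 1 + (m-1) by omega]
      rw [pow_add, pow_one]
    rw [this]
    calc (th d)^2 * ℓ = th d * (th d * ℓ) := by ring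
      _ < th d * (th d)^(m-1) := by exact mul_lt_mul_of_pos_left hprev hth0
  set s := (th d)^m with hs_def
  have hs0 : 0 < s := th_pow_pos hd m
  have hs1 : s ≤ 1 := th_pow_le_one hd m
  set g := s/(2*(d:ℝ)) with hg_def
  have hg0 : 0 < g := by positivity
  -- key: s + g ≤ ℓ
  have hsg : s + g ≤ ℓ := by
    have h1 : s ≤ th d * ℓ := hm1
    have : s + g = s * (1 + 1/(2*d)) := by rw [hg_def]; field_simp
    rw [this]
    have h2 : s * (1 + 1/(2*d)) ≤ th d * ℓ * (1 + 1/(2*d)) := by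
      apply mul_le_mul_of_nonneg_right h1; positivity
    have h3 : th d * (1 + 1/(2*(d:ℝ))) ≤ 1 := by
      rw [th]
      have : (0:ℝ) < (2*(d:ℝ))^2 := by positivity
      have hexp : (1 - 1/(2*(d:ℝ))) * (1 + 1/(2*(d:ℝ))) = 1 - (1/(2*(d:ℝ)))^2 := by ring
      rw [hexp]
      nlinarith [sq_nonneg (1/(2*(d:ℝ)))]
    calc s * (1 + 1/(2*d)) ≤ th d * ℓ * (1 + 1/(2*d)) := h2
      _ = (th d * (1 + 1/(2*d))) * ℓ := by ring
      _ ≤ 1 * ℓ := by apply mul_le_mul_of_nonneg_right h3 (le_of_lt hl0)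
      _ = ℓ := one_mul _
  rcases hJ with ⟨a, b, ha0, hab, hb1, hl, hJ⟩ | ⟨a, b, hb0, hba, ha1, hl, hJ⟩
  · -- non-wrapped case
    set j := ⌊a/g⌋₊ + 1 with hj_def
    have hfl : (⌊a/g⌋₊ : ℝ) ≤ a/g := Nat.floor_le (by positivity)
    have hfl2 : a/g < (⌊a/g⌋₊ : ℝ) + 1 := Nat.lt_floor_add_one _
    have hpos_gt : a < (j:ℝ) * g := by
      have : a = (a/g) * g := by field_simp
      rw [this]
      apply mul_lt_mul_of_pos_right _ hg0
      push_cast [hj_def]; linarith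
    have hpos_le : (j:ℝ) * g ≤ a + g := by
      have : (j:ℝ) = (⌊a/g⌋₊ : ℝ) + 1 := by push_cast [hj_def]; ring
      rw [this]
      have : ((⌊a/g⌋₊ : ℝ) + 1) * g = (⌊a/g⌋₊ : ℝ) * g + g := by ring
      rw [this]
      have : (⌊a/g⌋₊ : ℝ) * g ≤ (a/g) * g := mul_le_mul_of_nonneg_right hfl (le_of_lt hg0)
      have heq : (a/g) * g = a := by field_simp
      linarith [this, heq.le]
    have hnpos : npos d m j = (j:ℝ) * g := rfl
    have hends : (j:ℝ) * g + s ≤ b := by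
      have : a + g + s ≤ a + ℓ := by linarith
      rw [hl] at this; linarith
    have hlt1 : npos d m j < 1 := by
      rw [hnpos]; nlinarith
    refine ⟨m, j, hm2, hm1, lt_posCount_of_npos_lt_one hd hlt1, ?_⟩
    rw [hJ]
    intro x hx
    rcases hx with ⟨hx1, hx2⟩ | ⟨hx1, hx2⟩
    · rw [hnpos] at hx1
      constructor
      · linarith
      · have : x < min ((j:ℝ) * g + s) 1 := by rw [hnpos] at hx2; exact hx2
        have := lt_of_lt_of_le this (min_le_left _ _)
        linarith
    · exfalso
      rw [hnpos] at hx2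
      have : x < b - 1 := by linarith
      linarith
  · -- wrapped case
    set j' := ⌊a/g⌋₊ + 1 with hj_def
    have ha0 : 0 ≤ a := le_trans hb0 (le_of_lt hba)
    have hfl : (⌊a/g⌋₊ : ℝ) ≤ a/g := Nat.floor_le (by positivity)
    have hfl2 : a/g < (⌊a/g⌋₊ : ℝ) + 1 := Nat.lt_floor_add_one _
    have hpos_gt : a < (j':ℝ) * g := by
      have : a = (a/g) * g := by field_simp
      rw [this]
      apply mul_lt_mul_of_pos_right _ hg0
      push_cast [hj_def]; linarith
    have hpos_le : (j':ℝ) * g ≤ a + g := by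
      have h1 : (j':ℝ) = (⌊a/g⌋₊ : ℝ) + 1 := by push_cast [hj_def]; ring
      rw [h1]
      have h2 : (⌊a/g⌋₊ : ℝ) * g ≤ (a/g) * g := mul_le_mul_of_nonneg_right hfl (le_of_lt hg0)
      have heq : (a/g) * g = a := by field_simp
      nlinarith
    rcases lt_or_ge ((j':ℝ) * g) 1 with hcase | hcase
    · -- grid point inside (a,1)
      have hends : (j':ℝ) * g + s ≤ 1 + b := by
        have : a + g + s ≤ a + ℓ := by linarith
        rw [hl] at this; linarith
      refine ⟨m, j', hm2, hm1, lt_posCount_of_npos_lt_one hd hcase, ?_⟩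
      rw [hJ]
      intro x hx
      have hnpos : npos d m j' = (j':ℝ) * g := rfl
      rcases hx with ⟨hx1, hx2⟩ | ⟨hx1, hx2⟩
      · rw [hnpos] at hx1
        have hxlt1 : x < 1 := lt_of_lt_of_le hx2 (min_le_right _ _)
        constructor
        · exact ⟨by linarith, by linarith⟩
        · intro hmem
          exact absurd hmem.2 (by linarith)
      · rw [hnpos] at hx2
        have hxb : x < b := by linarith
        constructor
        · exact ⟨hx1, by linarith⟩
        · intro hmem
          exact absurd hmem.1 (by linarith)
    · -- wrap to position 0
      have h1a : 1 - a ≤ g := by linarith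
      have hsb : s ≤ b := by
        have : s ≤ ℓ - g := by linarith
        rw [hl] at this; linarith
      refine ⟨m, 0, hm2, hm1, ?_, ?_⟩
      · rw [posCount, Nat.lt_ceil]; push_cast; exact div_pos hd0 (th_pow_pos hd m)
      · rw [hJ]
        intro x hx
        have hnpos : npos d m 0 = 0 := by simp [npos]
        rcases hx with ⟨hx1, hx2⟩ | ⟨hx1, hx2⟩
        · rw [hnpos] at hx1 hx2
          rw [zero_add] at hx2
          have hxs : x < s := lt_of_lt_of_le hx2 (min_le_left _ _)
          have hxb : x < b := lt_of_lt_of_le hxs hsb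
          constructor
          · exact ⟨hx1, by linarith⟩
          · intro hmem
            exact absurd hmem.1 (by linarith)
        · exfalso
          rw [hnpos, zero_add] at hx2
          linarith

def netBox (d : ℕ) (p : (Fin d → ℕ) × (Fin d → ℕ)) : Set (Fin d → ℝ) :=
  Set.univ.pi fun i => tIco (npos d (p.1 i) (p.2 i)) ((th d)^(p.1 i))

def Lbd (d : ℕ) (ε : ℝ) : ℕ := ⌈Real.log (4/ε) / Real.log (1/(th d))⌉₊

open scoped Classical in
def netT (d : ℕ) (ε : ℝ) : Finset ((Fin d → ℕ) × (Fin d → ℕ)) :=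
  ((Fintype.piFinset fun _ : Fin d => Finset.range (Lbd d ε + 1)).filter
    (fun m => ε/4 ≤ ∏ i, (th d)^(m i))).biUnion
    (fun m => {m} ×ˢ (Fintype.piFinset fun i => Finset.range (posCount d (m i))))

lemma mem_netT {ε : ℝ} {p : (Fin d → ℕ) × (Fin d → ℕ)} :
    p ∈ netT d ε ↔
      ((∀ i, p.1 i < Lbd d ε + 1) ∧ ε/4 ≤ ∏ i, (th d)^(p.1 i)) ∧
        ∀ i, p.2 i < posCount d (p.1 i) := by
  classical
  obtain ⟨m, j⟩ := p
  simp only [netT, Finset.mem_biUnion, Finset.mem_filter, Fintype.mem_piFinset,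
    Finset.mem_range, Finset.mem_product, Finset.mem_singleton]
  constructor
  · rintro ⟨m', ⟨hm1, hm2⟩, hq1, hq2⟩
    rcases hq1 with rfl
    exact ⟨⟨hm1, hm2⟩, by simpa [Fintype.mem_piFinset, Finset.mem_range] using hq2⟩
  · rintro ⟨⟨hm1, hm2⟩, hj⟩
    exact ⟨m, ⟨hm1, hm2⟩, rfl, by simpa [Fintype.mem_piFinset, Finset.mem_range] using hj⟩

lemma posCount_le (hd : 2 ≤ d) (m : ℕ) :
    (posCount d m : ℝ) ≤ 3*d/(th d)^m := by
  have hs0 := th_pow_pos hd m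
  have hs1 := th_pow_le_one hd m
  have hd2 : (2:ℝ) ≤ d := by exact_mod_cast hd
  have hx0 : (0:ℝ) ≤ (2*d : ℝ)/(th d)^m := by positivity
  have h1 : (posCount d m : ℝ) < (2*d : ℝ)/(th d)^m + 1 := by
    rw [posCount]; exact_mod_cast Nat.ceil_lt_add_one hx0
  have h2 : (1:ℝ) ≤ (d:ℝ)/(th d)^m := by
    rw [le_div_iff₀ hs0]; nlinarith
  have : (2*d : ℝ)/(th d)^m + (d:ℝ)/(th d)^m = 3*d/(th d)^m := by ring
  linarith

lemma netT_card (hd : 2 ≤ d) {ε : ℝ} (hε0 : 0 < ε) :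
    ((netT d ε).card : ℝ) ≤ ((Lbd d ε + 1)^d : ℝ) * (3*d)^d * (4/ε) := by
  classical
  set F := (Fintype.piFinset fun _ : Fin d => Finset.range (Lbd d ε + 1)).filter
    (fun m => ε/4 ≤ ∏ i, (th d)^(m i)) with hF
  have hcard : (netT d ε).card ≤
      ∑ m ∈ F, (({m} ×ˢ (Fintype.piFinset fun i => Finset.range (posCount d (m i)))).card) :=
    Finset.card_biUnion_le
  have hterm : ∀ m ∈ F,
      ((({m} ×ˢ (Fintype.piFinset fun i => Finset.range (posCount d (m i)))).card : ℝ))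
        ≤ (3*d)^d * (4/ε) := by
    intro m hm
    have hadm : ε/4 ≤ ∏ i, (th d)^(m i) := (Finset.mem_filter.mp hm).2
    have hc : ({m} ×ˢ (Fintype.piFinset fun i => Finset.range (posCount d (m i)))).card
        = ∏ i, posCount d (m i) := by
      rw [Finset.card_product, Finset.card_singleton, one_mul, Fintype.card_piFinset]
      simp [Finset.card_range]
    rw [hc]
    push_cast
    calc (∏ i, (posCount d (m i) : ℝ)) ≤ ∏ i, (3*(d:ℝ)/(th d)^(m i)) := by
          apply Finset.prod_le_prod
          · intro i _; positivity
          · intro i _; exact posCount_le hd (m i)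
      _ = (3*(d:ℝ))^d / ∏ i, (th d)^(m i) := by
          rw [Finset.prod_div_distrib, Finset.prod_const, Finset.card_univ, Fintype.card_fin]
      _ ≤ (3*(d:ℝ))^d / (ε/4) := by
          apply div_le_div_of_nonneg_left _ (by positivity) hadm
          positivity
      _ = (3*(d:ℝ))^d * (4/ε) := by field_simp
  have hFcard : (F.card : ℝ) ≤ ((Lbd d ε + 1)^d : ℝ) := by
    have : F.card ≤ (Fintype.piFinset fun _ : Fin d => Finset.range (Lbd d ε + 1)).card :=
      Finset.card_filter_le _ _
    rw [Fintype.card_piFinset] at this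
    simp only [Finset.card_range, Finset.prod_const, Finset.card_univ, Fintype.card_fin] at this
    exact_mod_cast this
  calc ((netT d ε).card : ℝ)
      ≤ ∑ m ∈ F, ((({m} ×ˢ (Fintype.piFinset fun i => Finset.range (posCount d (m i)))).card : ℝ)) := by
        exact_mod_cast hcard
    _ ≤ ∑ _m ∈ F, ((3*(d:ℝ))^d * (4/ε)) := Finset.sum_le_sum hterm
    _ = (F.card : ℝ) * ((3*(d:ℝ))^d * (4/ε)) := by rw [Finset.sum_const, nsmul_eq_mul]
    _ ≤ ((Lbd d ε + 1)^d : ℝ) * ((3*(d:ℝ))^d * (4/ε)) := by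
        apply mul_le_mul_of_nonneg_right hFcard; positivity
    _ = ((Lbd d ε + 1)^d : ℝ) * (3*(d:ℝ))^d * (4/ε) := by ring

lemma netBox_subset_cube (hd : 2 ≤ d) {ε : ℝ} {p : (Fin d → ℕ) × (Fin d → ℕ)}
    (hp : p ∈ netT d ε) : netBox d p ⊆ cube d := by
  intro x hx i _
  have hj := (mem_netT.mp hp).2 i
  have h0 := npos_nonneg d (p.1 i) (p.2 i) hd
  have h1 := npos_lt_one hd hj
  exact tIco_subset_Icc h0 (le_of_lt h1) (th_pow_le_one hd (p.1 i)) (hx i (Set.mem_univ i))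

lemma netBox_measurable (p : (Fin d → ℕ) × (Fin d → ℕ)) : MeasurableSet (netBox d p) :=
  MeasurableSet.univ_pi fun i => tIco_measurable _ _

lemma volume_netBox (hd : 2 ≤ d) {ε : ℝ} {p : (Fin d → ℕ) × (Fin d → ℕ)}
    (hp : p ∈ netT d ε) :
    volume (netBox d p) = ENNReal.ofReal (∏ i, (th d)^(p.1 i)) := by
  rw [netBox, volume_pi_pi]
  rw [ENNReal.ofReal_prod_of_nonneg (fun i _ => le_of_lt (th_pow_pos hd (p.1 i)))]
  congr 1
  funext i
  exact volume_tIco (npos_nonneg d (p.1 i) (p.2 i) hd)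
    (npos_lt_one hd ((mem_netT.mp hp).2 i)) (th_pow_pos hd (p.1 i)) (th_pow_le_one hd (p.1 i))

lemma netBox_anchor_mem (hd : 2 ≤ d) {ε : ℝ} {p : (Fin d → ℕ) × (Fin d → ℕ)}
    (hp : p ∈ netT d ε) : (fun i => npos d (p.1 i) (p.2 i)) ∈ netBox d p := by
  intro i _
  exact mem_tIco_self (npos_lt_one hd ((mem_netT.mp hp).2 i)) (th_pow_pos hd (p.1 i))


lemma exists_net (hd : 2 ≤ d) {ε : ℝ} (hε0 : 0 < ε)
    (B : Set (Fin d → ℝ)) (hB : IsPeriodicBox B) (hvol : ε ≤ vol B) :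
    ∃ p ∈ netT d ε, netBox d p ⊆ B := by
  classical
  have hth0 := th_pos hd
  have hth1 := th_lt_one (show 1 ≤ d by omega)
  have hth34 := th_ge hd
  obtain ⟨a, b, ha, hb, hne, hBeq⟩ := hB
  have haI : ∀ i, a i ∈ Set.Icc (0:ℝ) 1 := fun i => ha i (Set.mem_univ i)
  have hbI : ∀ i, b i ∈ Set.Icc (0:ℝ) 1 := fun i => hb i (Set.mem_univ i)
  set ℓ : Fin d → ℝ := fun i => if a i < b i then b i - a i else 1 - (a i - b i) with hldef
  have hl0 : ∀ i, 0 ≤ ℓ i := by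
    intro i
    simp only [hldef]
    split_ifs with h
    · linarith
    · have := (haI i).2; have := (hbI i).1; push_neg at h; linarith
  have hl1 : ∀ i, ℓ i ≤ 1 := by
    intro i
    simp only [hldef]
    split_ifs with h
    · have := (haI i).1; have := (hbI i).2; linarith
    · push_neg at h; have := (hbI i).1; linarith [le_of_not_gt (by push_neg; exact h : ¬ a i < b i)]
  have hvolfac : ∀ i, volume (if a i < b i then Set.Ioo (a i) (b i)
      else Set.Icc (0:ℝ) 1 \ Set.Icc (b i) (a i)) = ENNReal.ofReal (ℓ i) := by
    intro i
    split_ifs with h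
    · rw [Real.volume_Ioo]; simp only [hldef]; rw [if_pos h]
    · have hba : b i ≤ a i := le_of_not_gt h
      have hsub : Set.Icc (b i) (a i) ⊆ Set.Icc (0:ℝ) 1 :=
        Set.Icc_subset_Icc (hbI i).1 (haI i).2
      rw [measure_diff hsub measurableSet_Icc.nullMeasurableSet
          (by rw [Real.volume_Icc]; exact ENNReal.ofReal_ne_top)]
      rw [Real.volume_Icc, Real.volume_Icc]
      rw [← ENNReal.ofReal_sub _ (by linarith)]
      simp only [hldef]; rw [if_neg h]
      norm_num
  have hvolB : vol B = ∏ i, ℓ i := by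
    rw [vol, hBeq, volume_pi_pi]
    have : ∀ i, volume (if a i < b i then Set.Ioo (a i) (b i)
        else Set.Icc (0:ℝ) 1 \ Set.Icc (b i) (a i)) = ENNReal.ofReal (ℓ i) := hvolfac
    rw [Finset.prod_congr rfl (fun i _ => this i)]
    rw [← ENNReal.ofReal_prod_of_nonneg (fun i _ => hl0 i)]
    exact ENNReal.toReal_ofReal (Finset.prod_nonneg (fun i _ => hl0 i))
  have hprod : ε ≤ ∏ i, ℓ i := by rw [← hvolB]; exact hvol
  have hli : ∀ i, ε ≤ ℓ i := by
    intro i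
    have h1 : (∏ k, ℓ k) = ℓ i * ∏ k ∈ Finset.univ.erase i, ℓ k :=
      (Finset.mul_prod_erase Finset.univ ℓ (Finset.mem_univ i)).symm
    have h2 : ∏ k ∈ Finset.univ.erase i, ℓ k ≤ 1 :=
      Finset.prod_le_one (fun k _ => hl0 k) (fun k _ => hl1 k)
    have h3 : ℓ i * ∏ k ∈ Finset.univ.erase i, ℓ k ≤ ℓ i * 1 :=
      mul_le_mul_of_nonneg_left h2 (hl0 i)
    rw [mul_one] at h3
    linarith [hprod, h1 ▸ hprod]
  have hcoord : ∀ i, ∃ m j : ℕ, (th d)^2 * ℓ i < (th d)^m ∧ (th d)^m ≤ th d * ℓ i ∧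
      j < posCount d m ∧ tIco (npos d m j) ((th d)^m) ⊆
        (if a i < b i then Set.Ioo (a i) (b i) else Set.Icc (0:ℝ) 1 \ Set.Icc (b i) (a i)) := by
    intro i
    apply coord hd _ (ℓ i) (lt_of_lt_of_le hε0 (hli i)) (hl1 i)
    by_cases h : a i < b i
    · left
      refine ⟨a i, b i, (haI i).1, h, (hbI i).2, ?_, ?_⟩
      · simp only [hldef]; rw [if_pos h]
      · rw [if_pos h]
    · right
      have hba : b i < a i := lt_of_le_of_ne (le_of_not_gt h) (Ne.symm (hne i))
      refine ⟨a i, b i, (hbI i).1, hba, (haI i).2, ?_, ?_⟩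
      · simp only [hldef]; rw [if_neg h]
      · rw [if_neg h]
  choose m j h1 h2 h3 h4 using hcoord
  refine ⟨(m, j), ?_, ?_⟩
  · rw [mem_netT]
    have hkey : ∀ i, ε/4 ≤ (th d)^(m i) := by
      intro i
      have : (th d)^2 * ε ≤ (th d)^2 * ℓ i :=
        mul_le_mul_of_nonneg_left (hli i) (by positivity)
      have h916 : (9:ℝ)/16 ≤ (th d)^2 := by nlinarith
      nlinarith [h1 i]
    refine ⟨⟨?_, ?_⟩, h3⟩
    · intro i
      show m i < Lbd d ε + 1
      have hkey' := hkey i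
      have hlog1 : Real.log (ε/4) ≤ (m i : ℝ) * Real.log (th d) := by
        have := Real.log_le_log (by positivity) hkey'
        rwa [Real.log_pow] at this
        -- note: log_pow : log (x ^ n) = n * log x
      have hlogth : 0 < Real.log (1/(th d)) := by
        apply Real.log_pos
        rw [lt_div_iff₀ hth0]; linarith
      have hlogeq : Real.log (1/(th d)) = - Real.log (th d) := by
        rw [one_div, Real.log_inv]
      have hlogeq2 : Real.log (4/ε) = - Real.log (ε/4) := by
        rw [show (4:ℝ)/ε = (ε/4)⁻¹ by field_simp, Real.log_inv]
      have hmle : (m i : ℝ) * Real.log (1/(th d)) ≤ Real.log (4/ε) := by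
        rw [hlogeq, hlogeq2]; nlinarith
      have : (m i : ℝ) ≤ Real.log (4/ε) / Real.log (1/(th d)) := by
        rw [le_div_iff₀ hlogth]; linarith
      have : (m i : ℝ) ≤ (Lbd d ε : ℝ) := le_trans this (Nat.le_ceil _)
      have : m i ≤ Lbd d ε := by exact_mod_cast this
      omega
    · show ε/4 ≤ ∏ i, (th d)^(m i)
      calc ε/4 = (1/4) * ε := by ring
        _ ≤ ((th d)^2)^d * ∏ i, ℓ i := by
            apply mul_le_mul (th_pow_2d hd) hprod (le_of_lt hε0) (pow_nonneg (sq_nonneg _) d)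
        _ = ∏ i, ((th d)^2 * ℓ i) := by
            rw [Finset.prod_mul_distrib, Finset.prod_const, Finset.card_univ, Fintype.card_fin]
        _ ≤ ∏ i, (th d)^(m i) := by
            apply Finset.prod_le_prod
            · intro i _; exact mul_nonneg (sq_nonneg _) (hl0 i)
            · intro i _; exact le_of_lt (h1 i)
  · rw [hBeq]
    intro x hx i _
    exact h4 i (hx i (Set.mem_univ i))


lemma cube_measurable : MeasurableSet (cube d) :=
  MeasurableSet.univ_pi fun _ => measurableSet_Icc

lemma volume_cube : volume (cube d) = 1 := by
  rw [cube, volume_pi_pi]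
  simp [Real.volume_Icc]

open scoped Classical in
lemma exists_good_sample (hd : 2 ≤ d) {ε : ℝ} (hε0 : 0 < ε) (hε1 : ε < 1) (n₀ : ℕ)
    (hC : ((netT d ε).card : ℝ) * (1 - ε/4)^n₀ ≤ 1/ε) :
    ∃ ω : Fin n₀ → (Fin d → ℝ), (∀ k, ω k ∈ cube d) ∧
      ((((netT d ε).filter (fun p => ∀ k, ω k ∉ netBox d p)).card : ℝ) ≤ 1/ε) := by
  set ν : Measure (Fin d → ℝ) := volume.restrict (cube d) with hν
  haveI : IsProbabilityMeasure ν := by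
    constructor
    rw [hν, Measure.restrict_apply_univ, volume_cube]
  set pm : Measure (Fin n₀ → Fin d → ℝ) := Measure.pi (fun _ => ν) with hpm
  haveI : IsProbabilityMeasure pm := by
    rw [hpm]; infer_instance
  have hνbox : ∀ p ∈ netT d ε, ν (netBox d p) = ENNReal.ofReal (∏ i, (th d)^(p.1 i)) := by
    intro p hp
    rw [hν, Measure.restrict_apply (netBox_measurable p),
      Set.inter_eq_self_of_subset_left (netBox_subset_cube hd hp), volume_netBox hd hp]
  set Bad : ((Fin d → ℕ) × (Fin d → ℕ)) → Set (Fin n₀ → Fin d → ℝ) :=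
    fun p => Set.univ.pi fun _ => (netBox d p)ᶜ with hBad
  have hBadMeas : ∀ p, MeasurableSet (Bad p) :=
    fun p => MeasurableSet.univ_pi fun _ => (netBox_measurable p).compl
  have hBadMem : ∀ p ω, ω ∈ Bad p ↔ ∀ k, ω k ∉ netBox d p := by
    intro p ω
    simp [hBad, Set.mem_univ_pi]
  have hπBad : ∀ p ∈ netT d ε, pm (Bad p) ≤ ENNReal.ofReal ((1 - ε/4)^n₀) := by
    intro p hp
    have hadm : ε/4 ≤ ∏ i, (th d)^(p.1 i) := (mem_netT.mp hp).1.2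
    have h1 : pm (Bad p) = (1 - ν (netBox d p))^n₀ := by
      rw [hpm, hBad, Measure.pi_pi]
      rw [Finset.prod_congr rfl (fun k _ => prob_compl_eq_one_sub (netBox_measurable p))]
      rw [Finset.prod_const, Finset.card_univ, Fintype.card_fin]
    rw [h1, hνbox p hp]
    have h2 : (1 : ℝ≥0∞) - ENNReal.ofReal (∏ i, (th d)^(p.1 i)) ≤
        ENNReal.ofReal (1 - ε/4) := by
      rw [ENNReal.ofReal_sub _ (by positivity), ENNReal.ofReal_one]
      exact tsub_le_tsub_left (ENNReal.ofReal_le_ofReal hadm) 1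
    calc (1 - ENNReal.ofReal (∏ i, (th d)^(p.1 i)))^n₀
        ≤ (ENNReal.ofReal (1 - ε/4))^n₀ := pow_le_pow_left' h2 n₀
      _ = ENNReal.ofReal ((1 - ε/4)^n₀) := (ENNReal.ofReal_pow (by linarith) n₀).symm
  have hsum : ∑ p ∈ netT d ε, pm (Bad p) ≤ ENNReal.ofReal (1/ε) := by
    calc ∑ p ∈ netT d ε, pm (Bad p)
        ≤ ∑ _p ∈ netT d ε, ENNReal.ofReal ((1 - ε/4)^n₀) := Finset.sum_le_sum hπBad
      _ = ((netT d ε).card : ℝ≥0∞) * ENNReal.ofReal ((1 - ε/4)^n₀) := by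
          rw [Finset.sum_const, nsmul_eq_mul]
      _ = ENNReal.ofReal (((netT d ε).card : ℝ) * (1 - ε/4)^n₀) := by
          rw [ENNReal.ofReal_mul (by positivity), ENNReal.ofReal_natCast]
      _ ≤ ENNReal.ofReal (1/ε) := ENNReal.ofReal_le_ofReal hC
  by_contra hcon
  push_neg at hcon
  set f : (Fin n₀ → Fin d → ℝ) → ℝ≥0∞ :=
    fun ω => ∑ p ∈ netT d ε, (Bad p).indicator (fun _ => (1:ℝ≥0∞)) ω with hf
  have hint : ∫⁻ ω, f ω ∂pm = ∑ p ∈ netT d ε, pm (Bad p) := by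
    rw [hf]
    rw [MeasureTheory.lintegral_finset_sum _
      (fun p _ => measurable_const.indicator (hBadMeas p))]
    exact Finset.sum_congr rfl fun p _ => MeasureTheory.lintegral_indicator_one (hBadMeas p)
  set A : Set (Fin n₀ → Fin d → ℝ) := Set.univ.pi fun _ => cube d with hA
  have hAmeas : MeasurableSet A := MeasurableSet.univ_pi fun _ => cube_measurable
  have hπA : pm A = 1 := by
    rw [hpm, hA, Measure.pi_pi]
    have : ν (cube d) = 1 := by
      rw [hν, Measure.restrict_apply cube_measurable, Set.inter_self, volume_cube]
    simp [this]
  set c : ℝ≥0∞ := ((⌊1/ε⌋₊ + 1 : ℕ) : ℝ≥0∞) with hc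
  have hfge : ∀ ω ∈ A, c ≤ f ω := by
    intro ω hω
    have hωcube : ∀ k, ω k ∈ cube d := fun k => hω k (Set.mem_univ k)
    have hcard := hcon ω hωcube
    have hfval : f ω = (((netT d ε).filter (fun p => ∀ k, ω k ∉ netBox d p)).card : ℝ≥0∞) := by
      rw [hf, Finset.card_filter]
      push_cast
      apply Finset.sum_congr rfl
      intro p _
      rw [Set.indicator_apply]
      by_cases h : ω ∈ Bad p
      · rw [if_pos h, if_pos ((hBadMem p ω).mp h)]
      · rw [if_neg h, if_neg (fun hh => h ((hBadMem p ω).mpr hh))]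
    rw [hfval, hc]
    have : ⌊1/ε⌋₊ < ((netT d ε).filter (fun p => ∀ k, ω k ∉ netBox d p)).card := by
      rw [Nat.floor_lt (by positivity)]
      exact hcard
    exact_mod_cast Nat.succ_le_of_lt this
  have hlow : c ≤ ∫⁻ ω, f ω ∂pm := by
    calc c = c * pm A := by rw [hπA, mul_one]
      _ = ∫⁻ ω, A.indicator (fun _ => c) ω ∂pm := by
          rw [MeasureTheory.lintegral_indicator_const hAmeas]
      _ ≤ ∫⁻ ω, f ω ∂pm := by
          apply MeasureTheory.lintegral_mono
          intro ω
          rw [Set.indicator_apply]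
          by_cases h : ω ∈ A
          · rw [if_pos h]; exact hfge ω h
          · rw [if_neg h]; exact zero_le
  have hup : ENNReal.ofReal (1/ε) < c := by
    rw [hc]
    have h1 : (1:ℝ)/ε < ((⌊1/ε⌋₊ + 1 : ℕ) : ℝ) := by
      push_cast
      exact Nat.lt_floor_add_one _
    calc ENNReal.ofReal (1/ε) < ENNReal.ofReal (((⌊1/ε⌋₊ + 1 : ℕ) : ℝ)) := by
          exact (ENNReal.ofReal_lt_ofReal_iff (by positivity)).mpr h1
      _ = ((⌊1/ε⌋₊ + 1 : ℕ) : ℝ≥0∞) := ENNReal.ofReal_natCast _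
  have := lt_of_lt_of_le hup (le_trans hlow (le_trans hint.le hsum))
  exact lt_irrefl _ this


lemma sample_bound {ε : ℝ} (hε0 : 0 < ε) (hε1 : ε < 1) (M : ℝ) (hM : 0 ≤ M) :
    M * (1-ε/4)^(⌈(4/ε)*Real.log (max (M*ε) 1)⌉₊) ≤ 1/ε := by
  set G := Real.log (max (M*ε) 1) with hGdef
  have hG0 : 0 ≤ G := Real.log_nonneg (le_max_right _ _)
  set n₀ := ⌈(4/ε)*G⌉₊ with hn₀
  have hn : (4/ε)*G ≤ (n₀ : ℝ) := Nat.le_ceil _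
  have h14 : 0 ≤ 1 - ε/4 := by linarith
  have hexp : (1-ε/4 : ℝ) ≤ Real.exp (-(ε/4)) := by
    have := Real.add_one_le_exp (-(ε/4)); linarith
  have hpow : (1-ε/4)^n₀ ≤ Real.exp (-(ε/4)*(n₀:ℝ)) := by
    calc (1-ε/4)^n₀ ≤ (Real.exp (-(ε/4)))^n₀ := pow_le_pow_left₀ h14 hexp n₀
      _ = Real.exp (-(ε/4)*(n₀:ℝ)) := by
          rw [← Real.exp_nat_mul]; congr 1; ring
  have harg : -(ε/4)*(n₀:ℝ) ≤ -G := by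
    have h1 : (ε/4) * ((4/ε)*G) ≤ (ε/4) * (n₀:ℝ) :=
      mul_le_mul_of_nonneg_left hn (by positivity)
    have h2 : (ε/4) * ((4/ε)*G) = G := by field_simp
    nlinarith
  have hpow2 : (1-ε/4)^n₀ ≤ Real.exp (-G) :=
    le_trans hpow (Real.exp_le_exp.mpr harg)
  have hmain : M * (1-ε/4)^n₀ ≤ M * Real.exp (-G) :=
    mul_le_mul_of_nonneg_left hpow2 hM
  rcases le_or_gt (M*ε) 1 with h | h
  · have hGeq : G = 0 := by rw [hGdef, max_eq_right h, Real.log_one]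
    rw [hGeq] at hmain
    rw [neg_zero, Real.exp_zero, mul_one] at hmain
    have : M ≤ 1/ε := by rw [le_div_iff₀ hε0]; exact h
    linarith
  · have hM0 : 0 < M := by nlinarith
    have hGeq : G = Real.log (M*ε) := by rw [hGdef, max_eq_left h.le]
    rw [hGeq] at hmain
    rw [Real.exp_neg, Real.exp_log (by positivity)] at hmain
    have : M * (M*ε)⁻¹ = 1/ε := by field_simp
    linarith [hmain, this.le, this.ge]

lemma log_E1_ge_one {ε : ℝ} (hε0 : 0 < ε) (hε1 : ε < 1) :
    1 ≤ Real.log (Real.exp 1/ε) := by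
  rw [Real.log_div (Real.exp_ne_zero 1) (ne_of_gt hε0), Real.log_exp]
  have := Real.log_neg hε0 hε1
  linarith

lemma card_log_bound (hd : 2 ≤ d) {ε : ℝ} (hε0 : 0 < ε) (hε1 : ε < 1) :
    Real.log (max (((netT d ε).card : ℝ) * ε) 1) ≤
      (d:ℝ) * Real.log (12*(d:ℝ)^2*Real.log (Real.exp 1/ε)) + Real.log 4 := by
  have hd2 : (2:ℝ) ≤ (d:ℝ) := by exact_mod_cast hd
  set E1 := Real.log (Real.exp 1/ε) with hE1def
  have hE1 : 1 ≤ E1 := log_E1_ge_one hε0 hε1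
  have harg1 : (1:ℝ) ≤ 12*(d:ℝ)^2*E1 := by nlinarith
  have hRHS0 : 0 ≤ (d:ℝ) * Real.log (12*(d:ℝ)^2*E1) + Real.log 4 := by
    have h1 : 0 ≤ Real.log (12*(d:ℝ)^2*E1) := Real.log_nonneg harg1
    have h2 : 0 ≤ Real.log 4 := Real.log_nonneg (by norm_num)
    positivity
  rcases le_or_gt (((netT d ε).card : ℝ) * ε) 1 with h | h
  · rw [max_eq_right h, Real.log_one]; exact hRHS0
  · rw [max_eq_left h.le]
    have hM := netT_card hd hε0
    set M := ((netT d ε).card : ℝ) with hMdef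
    set L := Lbd d ε with hLdef
    have hth0 := th_pos hd
    have hth1 := th_lt_one (show 1 ≤ d by omega)
    -- bound on L
    have hlogth : 1/(2*(d:ℝ)) ≤ Real.log (1/(th d)) := by
      have h1 : Real.log (th d) ≤ th d - 1 := Real.log_le_sub_one_of_pos hth0
      have h2 : th d - 1 = -(1/(2*(d:ℝ))) := by rw [th]; ring
      have h3 : Real.log (1/(th d)) = - Real.log (th d) := by
        rw [one_div, Real.log_inv]
      rw [h2] at h1
      rw [h3]
      linarith
    have hlogth0 : 0 < Real.log (1/(th d)) := by
      have : (0:ℝ) < 1/(2*(d:ℝ)) := by positivity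
      linarith
    have hlog4e : 0 ≤ Real.log (4/ε) := by
      apply Real.log_nonneg
      rw [le_div_iff₀ hε0]; linarith
    have hq : Real.log (4/ε) / Real.log (1/(th d)) ≤ 2*(d:ℝ)*Real.log (4/ε) := by
      rw [div_le_iff₀ hlogth0]
      have h1 : 2*(d:ℝ)*Real.log (4/ε) * Real.log (1/(th d)) ≥
          2*(d:ℝ)*Real.log (4/ε) * (1/(2*(d:ℝ))) := by
        apply mul_le_mul_of_nonneg_left hlogth (by positivity)
      have h2 : 2*(d:ℝ)*Real.log (4/ε) * (1/(2*(d:ℝ))) = Real.log (4/ε) := by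
        field_simp
      linarith
    have hlog4ε : Real.log (4/ε) ≤ (7/5) * E1 := by
      have h1 : Real.log (4/ε) = Real.log 4 - Real.log ε :=
        Real.log_div (by norm_num) (ne_of_gt hε0)
      have h2 : E1 = 1 - Real.log ε := by
        rw [hE1def, Real.log_div (Real.exp_ne_zero 1) (ne_of_gt hε0), Real.log_exp]
      have hlog4 : Real.log 4 ≤ 1.4 := by
        have h4 : (4:ℝ) = 2^2 := by norm_num
        rw [h4, Real.log_pow]
        have := Real.log_two_lt_d9
        push_cast
        nlinarith
      nlinarith [hE1]
    have hL1 : ((L:ℝ) + 1) ≤ 4*(d:ℝ)*E1 := by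
      have hc : (L:ℝ) < Real.log (4/ε) / Real.log (1/(th d)) + 1 := by
        rw [hLdef, Lbd]
        exact Nat.ceil_lt_add_one (by positivity)
      have : (L:ℝ) + 1 < 2*(d:ℝ)*Real.log (4/ε) + 2 := by linarith
      have h2 : 2*(d:ℝ)*Real.log (4/ε) ≤ 2*(d:ℝ)*((7/5)*E1) :=
        mul_le_mul_of_nonneg_left hlog4ε (by positivity)
      nlinarith
    -- main chain
    have hMε : M * ε ≤ ((L:ℝ)+1)^d * (3*(d:ℝ))^d * 4 := by
      have h1 : M * ε ≤ (((L:ℝ)+1)^d * (3*(d:ℝ))^d * (4/ε)) * ε :=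
        mul_le_mul_of_nonneg_right (by exact_mod_cast hM) (le_of_lt hε0)
      have h2 : (((L:ℝ)+1)^d * (3*(d:ℝ))^d * (4/ε)) * ε
          = ((L:ℝ)+1)^d * (3*(d:ℝ))^d * 4 := by field_simp
      linarith
    have hL1pos : (0:ℝ) < (L:ℝ)+1 := by positivity
    have h3d : (0:ℝ) < 3*(d:ℝ) := by positivity
    calc Real.log (M*ε) ≤ Real.log (((L:ℝ)+1)^d * (3*(d:ℝ))^d * 4) :=
          Real.log_le_log (by linarith) hMε
      _ = (d:ℝ) * Real.log (((L:ℝ)+1)*(3*(d:ℝ))) + Real.log 4 := by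
          rw [Real.log_mul (by positivity) (by norm_num),
            Real.log_mul (by positivity) (by positivity),
            Real.log_pow, Real.log_pow,
            Real.log_mul (ne_of_gt hL1pos) (ne_of_gt h3d)]
          push_cast
          ring
      _ ≤ (d:ℝ) * Real.log (12*(d:ℝ)^2*E1) + Real.log 4 := by
          have harg : ((L:ℝ)+1)*(3*(d:ℝ)) ≤ 12*(d:ℝ)^2*E1 := by
            have h := mul_le_mul_of_nonneg_right hL1 (le_of_lt h3d)
            have h2 : (4*(d:ℝ)*E1)*(3*(d:ℝ)) = 12*(d:ℝ)^2*E1 := by ring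
            linarith
          have hmono := Real.log_le_log (by positivity) harg
          have := mul_le_mul_of_nonneg_left hmono (by positivity : (0:ℝ) ≤ (d:ℝ))
          linarith

lemma final_arith (hd : 2 ≤ d) {ε : ℝ} (hε0 : 0 < ε) (hε1 : ε < 1) (G : ℝ) (hG0 : 0 ≤ G)
    (hG : G ≤ (d:ℝ) * Real.log (12*(d:ℝ)^2*Real.log (Real.exp 1/ε)) + Real.log 4) :
    (⌈(4/ε)*G⌉₊ : ℝ) + 1/ε ≤
      8 * Real.exp 1 * d * (Real.log (Real.log (Real.exp 1/ε)) + Real.log (2*d)) / ε := by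
  have hd2 : (2:ℝ) ≤ (d:ℝ) := by exact_mod_cast hd
  set E1 := Real.log (Real.exp 1/ε) with hE1def
  have hE1 : 1 ≤ E1 := log_E1_ge_one hε0 hε1
  set W := Real.log E1 with hWdef
  have hW0 : 0 ≤ W := Real.log_nonneg hE1
  have hlog2u : Real.log 2 < 0.6931471808 := Real.log_two_lt_d9
  have hlog2l : (0.6931471803:ℝ) < Real.log 2 := Real.log_two_gt_d9
  have he : (2.7182818283:ℝ) < Real.exp 1 := Real.exp_one_gt_d9
  have hlogd : Real.log 2 ≤ Real.log (d:ℝ) := Real.log_le_log (by norm_num) hd2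
  have hlog12 : Real.log 12 ≤ 4 * Real.log 2 := by
    have h1 : Real.log 12 ≤ Real.log 16 := Real.log_le_log (by norm_num) (by norm_num)
    have h2 : (16:ℝ) = 2^4 := by norm_num
    rw [h2, Real.log_pow] at h1
    push_cast at h1
    linarith
  have hlog4 : Real.log 4 = 2 * Real.log 2 := by
    have h2 : (4:ℝ) = 2^2 := by norm_num
    rw [h2, Real.log_pow]
    push_cast; ring
  have hlog2d : Real.log (2*(d:ℝ)) = Real.log 2 + Real.log (d:ℝ) :=
    Real.log_mul (by norm_num) (by positivity)
  have hsplit : Real.log (12*(d:ℝ)^2*E1) = Real.log 12 + 2*Real.log (d:ℝ) + W := by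
    rw [Real.log_mul (by positivity) (by positivity),
      Real.log_mul (by norm_num) (by positivity), Real.log_pow]
    push_cast [hWdef]
    ring
  have hceil : (⌈(4/ε)*G⌉₊ : ℝ) ≤ (4/ε)*G + 1 :=
    le_of_lt (Nat.ceil_lt_add_one (by positivity))
  -- reduce to multiplied inequality
  have key : 4*G + ε + 1 ≤ 8 * Real.exp 1 * (d:ℝ) * (W + Real.log (2*(d:ℝ))) := by
    have hGbound : G ≤ (d:ℝ)*(Real.log 12 + 2*Real.log (d:ℝ) + W) + Real.log 4 := by
      rw [← hsplit]; exact hG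
    have hlogd0 : 0 ≤ Real.log (d:ℝ) := le_trans (by linarith) hlogd
    have hd0 : (0:ℝ) ≤ (d:ℝ) := by linarith
    rw [hlog2d]
    have a1 : 0 ≤ ((d:ℝ)*(4*Real.log 2 - Real.log 12)) :=
      mul_nonneg hd0 (by linarith)
    have a2 : 0 ≤ (8*Real.exp 1 - 4) * ((d:ℝ)*W) :=
      mul_nonneg (by linarith) (mul_nonneg hd0 hW0)
    have a3 : 0 ≤ (8*Real.exp 1 - 8) * ((d:ℝ)*Real.log (d:ℝ)) :=
      mul_nonneg (by linarith) (mul_nonneg hd0 hlogd0)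
    have a4 : (2*0.6931471803:ℝ) ≤ (d:ℝ)*Real.log 2 :=
      mul_le_mul hd2 hlog2l.le (by norm_num) hd0
    have a5 : 0 ≤ (8*Real.exp 1 - 16) * ((d:ℝ)*Real.log 2 - 2*0.6931471803) :=
      mul_nonneg (by linarith) (by linarith)
    have e1 : G ≤ 4*((d:ℝ)*Real.log 2) + 2*((d:ℝ)*Real.log (d:ℝ)) + (d:ℝ)*W + 2*Real.log 2 := by
      have hexpand : (d:ℝ)*(Real.log 12 + 2*Real.log (d:ℝ) + W)
          = (d:ℝ)*Real.log 12 + 2*((d:ℝ)*Real.log (d:ℝ)) + (d:ℝ)*W := by ring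
      linarith [hGbound, hexpand.le, hexpand.ge, a1, hlog4.le, hlog4.ge]
    linarith [e1, a2, a3, a4, a5, he, hlog2u, hlog2l, hε1.le, hW0, hd2]
  have hεle : ε ≤ 1 := le_of_lt hε1
  rw [le_div_iff₀ hε0]
  have hexpand : ((⌈(4/ε)*G⌉₊ : ℝ) + 1/ε) * ε = (⌈(4/ε)*G⌉₊ : ℝ) * ε + 1 := by
    field_simp
  rw [hexpand]
  have h1 : (⌈(4/ε)*G⌉₊ : ℝ) * ε ≤ ((4/ε)*G + 1) * ε :=
    mul_le_mul_of_nonneg_right hceil (le_of_lt hε0)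
  have h2 : ((4/ε)*G + 1) * ε = 4*G + ε := by field_simp
  linarith [key, h1, h2.le, h2.ge]

end TorusDisp

open TorusDisp

/-- Main theorem, torus bound: `Ñ(ε,d) ≤ 8 e d (ln ln (e/ε) + ln (2d)) / ε`, i.e. there is a
set `P ⊆ [0,1]^d` of at most this cardinality meeting every periodic box of volume `≥ ε`. -/
theorem torus_dispersion_bound (d : ℕ) (hd : 2 ≤ d) (ε : ℝ) (hε : ε ∈ Set.Ioo (0 : ℝ) 1) :
    ∃ P : Finset (Fin d → ℝ), ↑P ⊆ cube d ∧
      (P.card : ℝ) ≤ 8 * Real.exp 1 * d *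
        (Real.log (Real.log (Real.exp 1 / ε)) + Real.log (2 * d)) / ε ∧
      ∀ B : Set (Fin d → ℝ), IsPeriodicBox B → ε ≤ vol B → (B ∩ ↑P).Nonempty := by
  classical
  obtain ⟨hε0, hε1⟩ := hε
  set G := Real.log (max (((netT d ε).card : ℝ) * ε) 1) with hGdef
  have hG0 : 0 ≤ G := Real.log_nonneg (le_max_right _ _)
  set n₀ := ⌈(4/ε)*G⌉₊ with hn₀
  have hC : ((netT d ε).card : ℝ) * (1-ε/4)^n₀ ≤ 1/ε :=
    sample_bound hε0 hε1 _ (Nat.cast_nonneg _)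
  obtain ⟨ω, hωcube, hbad⟩ := exists_good_sample hd hε0 hε1 n₀ hC
  set badF := (netT d ε).filter (fun p => ∀ k, ω k ∉ netBox d p) with hbadF
  set anchor : ((Fin d → ℕ) × (Fin d → ℕ)) → (Fin d → ℝ) :=
    fun p => fun i => npos d (p.1 i) (p.2 i) with hanchor
  set P := (Finset.image ω Finset.univ) ∪ (Finset.image anchor badF) with hP
  refine ⟨P, ?_, ?_, ?_⟩
  · -- subset of cube
    intro x hx
    rw [hP, Finset.coe_union, Set.mem_union] at hx
    rcases hx with hx | hx
    · obtain ⟨k, _, rfl⟩ := Finset.mem_image.mp (Finset.mem_coe.mp hx)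
      exact hωcube k
    · obtain ⟨p, hp, rfl⟩ := Finset.mem_image.mp (Finset.mem_coe.mp hx)
      have hpT : p ∈ netT d ε := (Finset.mem_filter.mp hp).1
      exact netBox_subset_cube hd hpT (netBox_anchor_mem hd hpT)
  · -- cardinality bound
    have h1 : P.card ≤ n₀ + badF.card := by
      calc P.card ≤ (Finset.image ω Finset.univ).card + (Finset.image anchor badF).card :=
            Finset.card_union_le _ _
        _ ≤ n₀ + badF.card := by
            apply add_le_add
            · exact le_trans Finset.card_image_le (by simp)
            · exact Finset.card_image_le
    have h2 : (P.card : ℝ) ≤ (n₀ : ℝ) + 1/ε := by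
      have : (P.card : ℝ) ≤ (n₀ : ℝ) + (badF.card : ℝ) := by exact_mod_cast h1
      linarith [hbad]
    exact le_trans h2 (final_arith hd hε0 hε1 G hG0 (card_log_bound hd hε0 hε1))
  · -- hitting property
    intro B hB hvol
    obtain ⟨p, hpT, hsub⟩ := exists_net hd hε0 B hB hvol
    by_cases hp : ∀ k, ω k ∉ netBox d p
    · have hpb : p ∈ badF := Finset.mem_filter.mpr ⟨hpT, hp⟩
      refine ⟨anchor p, hsub (netBox_anchor_mem hd hpT), ?_⟩
      rw [hP]
      exact Finset.mem_coe.mpr (Finset.mem_union_right _ (Finset.mem_image_of_mem anchor hpb))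
    · push_neg at hp
      obtain ⟨k, hk⟩ := hp
      refine ⟨ω k, hsub hk, ?_⟩
      rw [hP]
      exact Finset.mem_coe.mpr
        (Finset.mem_union_left _ (Finset.mem_image_of_mem ω (Finset.mem_univ k)))
end
end

section
/- Let d ≥ 1 be an integer, let 0 < δ ≤ 1/3 and δ ≤ ε ≤ 1. Let N be a finite δ-approximation for B_d(ε) with δ·|N| ≥ e. Then N(ε,d) ≤ ln(4·δ·|N|)/δ; that is, there exists a set P ⊆ [0,1]^d of cardinality at most ln(4·δ·|N|)/δ with disp(P) ≤ ε. -/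
open MeasureTheory Real Set ProbabilityTheory
open scoped ENNReal Classical

noncomputable section

lemma isBox_subset_cube {d : ℕ} {B : Set (Fin d → ℝ)} (h : IsBox B) : B ⊆ cube d := by
  obtain ⟨a, b, hab, rfl⟩ := h
  refine Set.pi_mono fun i _ => ?_
  exact (Set.Ico_subset_Icc_self).trans (Set.Icc_subset_Icc (hab i).1 (hab i).2.2)

lemma isBox_measurable {d : ℕ} {B : Set (Fin d → ℝ)} (h : IsBox B) : MeasurableSet B := by
  obtain ⟨a, b, hab, rfl⟩ := h
  exact MeasurableSet.univ_pi fun i => measurableSet_Ico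

lemma volume_cube (d : ℕ) : MeasureTheory.volume (cube d) = 1 := by
  rw [cube, volume_pi_pi]
  simp [Real.volume_Icc]

lemma isBox_volume_ne_top {d : ℕ} {B : Set (Fin d → ℝ)} (h : IsBox B) :
    MeasureTheory.volume B ≠ ⊤ := by
  have h1 : MeasureTheory.volume B ≤ 1 := by
    rw [← volume_cube d]; exact measure_mono (isBox_subset_cube h)
  exact ne_top_of_le_ne_top ENNReal.one_ne_top h1

lemma zero_mem_cube (d : ℕ) : (fun _ => (0:ℝ)) ∈ cube d := by
  intro i _; exact ⟨le_rfl, zero_le_one⟩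

lemma exists_good_point {d : ℕ} {δ : ℝ} (hδ : 0 < δ) (s : Finset (Set (Fin d → ℝ)))
    (hs : ∀ B ∈ s, IsBox B ∧ δ ≤ vol B) :
    ∃ x ∈ cube d, δ * s.card ≤ ((s.filter (fun B => x ∈ B)).card : ℝ) := by
  classical
  rcases s.eq_empty_or_nonempty with rfl | hne
  · exact ⟨fun _ => 0, zero_mem_cube d, by simp⟩
  by_contra hcon
  push_neg at hcon
  set c : ℕ := ⌈δ * s.card⌉₊ with hc
  have hpos : 0 < δ * s.card := by
    have : (0:ℝ) < s.card := by exact_mod_cast Finset.card_pos.mpr hne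
    positivity
  have hc1 : 1 ≤ c := Nat.one_le_ceil_iff.mpr hpos
  -- key identity
  have key : ∑ B ∈ s, MeasureTheory.volume B
      = ∫⁻ x in cube d, ((s.filter (fun B => x ∈ B)).card : ℝ≥0∞) := by
    have h1 : ∀ x, ((s.filter (fun B => x ∈ B)).card : ℝ≥0∞)
        = ∑ B ∈ s, B.indicator (fun _ => (1:ℝ≥0∞)) x := by
      intro x
      rw [Finset.card_filter]
      push_cast
      exact Finset.sum_congr rfl fun B _ => by simp [Set.indicator_apply]
    simp_rw [h1]
    rw [lintegral_finset_sum]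
    · refine Finset.sum_congr rfl fun B hB => ?_
      rw [lintegral_indicator (isBox_measurable (hs B hB).1)]
      simp only [lintegral_const, one_mul, Measure.restrict_restrict (isBox_measurable (hs B hB).1), Measure.restrict_apply_univ]
      rw [Set.inter_eq_self_of_subset_left (isBox_subset_cube (hs B hB).1)]
    · exact fun B hB => measurable_const.indicator (isBox_measurable (hs B hB).1)
  -- lower bound
  have low : (s.card : ℝ≥0∞) * ENNReal.ofReal δ ≤ ∑ B ∈ s, MeasureTheory.volume B := by
    calc (s.card : ℝ≥0∞) * ENNReal.ofReal δ = ∑ _B ∈ s, ENNReal.ofReal δ := by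
          rw [Finset.sum_const, nsmul_eq_mul]
      _ ≤ ∑ B ∈ s, MeasureTheory.volume B := by
          refine Finset.sum_le_sum fun B hB => ?_
          exact ENNReal.ofReal_le_of_le_toReal (hs B hB).2
  -- upper bound
  have up : ∫⁻ x in cube d, ((s.filter (fun B => x ∈ B)).card : ℝ≥0∞)
      ≤ ((c - 1 : ℕ) : ℝ≥0∞) := by
    have hmeas : MeasurableSet (cube d) :=
      MeasurableSet.univ_pi fun i => measurableSet_Icc
    calc ∫⁻ x in cube d, ((s.filter (fun B => x ∈ B)).card : ℝ≥0∞)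
        ≤ ∫⁻ _x in cube d, ((c - 1 : ℕ) : ℝ≥0∞) := by
          refine setLIntegral_mono' hmeas fun x hx => ?_
          have hlt : (s.filter (fun B => x ∈ B)).card < c :=
            Nat.lt_ceil.mpr (hcon x hx)
          exact_mod_cast Nat.le_sub_one_of_lt hlt
      _ = ((c - 1 : ℕ) : ℝ≥0∞) := by
          rw [setLIntegral_const, volume_cube, mul_one]
  have final : δ * s.card ≤ ((c - 1 : ℕ) : ℝ) := by
    have := (key ▸ low).trans up
    have h2 := ENNReal.toReal_mono (by simp) this
    rw [ENNReal.toReal_mul, ENNReal.toReal_ofReal hδ.le, ENNReal.toReal_natCast, ENNReal.toReal_natCast] at h2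
    rw [mul_comm]
    exact h2
  have hlt : ((c - 1 : ℕ) : ℝ) < δ * s.card := by
    have h3 : (c : ℝ) < δ * s.card + 1 := Nat.ceil_lt_add_one hpos.le
    rw [Nat.cast_sub hc1]
    push_cast
    linarith
  linarith

lemma greedy {d : ℕ} {δ : ℝ} (hδ : 0 < δ) (hδ1 : δ ≤ 1) (s : Finset (Set (Fin d → ℝ)))
    (hs : ∀ B ∈ s, IsBox B ∧ δ ≤ vol B) (m : ℕ) :
    ∃ (P : Finset (Fin d → ℝ)) (t : Finset (Set (Fin d → ℝ))),
      ↑P ⊆ cube d ∧ P.card ≤ m ∧ t ⊆ s ∧ ((t.card : ℝ) ≤ (1 - δ)^m * s.card) ∧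
      ∀ B ∈ s, B ∉ t → (B ∩ ↑P).Nonempty := by
  classical
  induction m with
  | zero =>
    exact ⟨∅, s, by simp, by simp, le_rfl, by simp, fun B hB hB' => absurd hB hB'⟩
  | succ m ih =>
    obtain ⟨P, t, hPc, hPcard, hts, htcard, hpierce⟩ := ih
    obtain ⟨x, hx, hxcount⟩ := exists_good_point hδ t (fun B hB => hs B (hts hB))
    refine ⟨insert x P, t.filter (fun B => x ∉ B), ?_, ?_, ?_, ?_, ?_⟩
    · rw [Finset.coe_insert]
      exact Set.insert_subset hx hPc
    · exact (Finset.card_insert_le _ _).trans (Nat.succ_le_succ hPcard)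
    · exact (Finset.filter_subset _ _).trans hts
    · have hsplit : (t.filter (fun B => x ∈ B)).card + (t.filter (fun B => x ∉ B)).card
          = t.card := Finset.card_filter_add_card_filter_not _
      have h1 : ((t.filter (fun B => x ∉ B)).card : ℝ) = t.card - (t.filter (fun B => x ∈ B)).card := by
        push_cast [← hsplit]; ring
      have hscard : (0:ℝ) ≤ s.card := by positivity
      have h2 : ((t.filter (fun B => x ∉ B)).card : ℝ) ≤ (1 - δ) * t.card := by
        rw [h1]; nlinarith
      calc ((t.filter (fun B => x ∉ B)).card : ℝ) ≤ (1 - δ) * t.card := h2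
        _ ≤ (1 - δ) * ((1 - δ)^m * s.card) := by
            have : (0:ℝ) ≤ 1 - δ := by linarith
            nlinarith
        _ = (1 - δ)^(m+1) * s.card := by ring
    · intro B hB hB'
      by_cases ht : B ∈ t
      · have hxB : x ∈ B := by
          by_contra hxB
          exact hB' (Finset.mem_filter.mpr ⟨ht, hxB⟩)
        exact ⟨x, hxB, by simp⟩
      · obtain ⟨y, hy1, hy2⟩ := hpierce B hB ht
        exact ⟨y, hy1, by simp [hy2]⟩

/-- New probabilistic lemma, cube case: if `𝒩` is a finite `δ`-approximation for the boxes
of volume `≥ ε` with `δ|𝒩| ≥ e`, then there is a set `P ⊆ [0,1]^d` of cardinality at most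
`ln(4δ|𝒩|)/δ` with `disp(P) ≤ ε`. -/
theorem piercing_lemma_cube (d : ℕ) (hd : 1 ≤ d) (δ ε : ℝ) (hδ : 0 < δ) (hδ3 : δ ≤ 1 / 3)
    (hδε : δ ≤ ε) (hε : ε ≤ 1) (𝒩 : Set (Set (Fin d → ℝ))) (hfin : 𝒩.Finite)
    (happ : DeltaApprox δ ε 𝒩) (hcard : Real.exp 1 ≤ δ * 𝒩.ncard) :
    ∃ P : Finset (Fin d → ℝ), ↑P ⊆ cube d ∧
      (P.card : ℝ) ≤ Real.log (4 * δ * 𝒩.ncard) / δ ∧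
      disp (↑P : Set (Fin d → ℝ)) ≤ ε := by
  classical
  set N : ℕ := 𝒩.ncard with hNdef
  have hNF : hfin.toFinset.card = N := by
    rw [hNdef, Set.ncard_eq_toFinset_card _ hfin]
  set s : Finset (Set (Fin d → ℝ)) := hfin.toFinset.filter (fun B => δ ≤ vol B) with hsdef
  have hsmem : ∀ B ∈ s, IsBox B ∧ δ ≤ vol B := by
    intro B hB
    rw [hsdef, Finset.mem_filter, Set.Finite.mem_toFinset] at hB
    exact ⟨happ.1 B hB.1, hB.2⟩
  have hscard : (s.card : ℝ) ≤ N := by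
    exact_mod_cast le_trans (Finset.card_filter_le _ _) (le_of_eq hNF)
  -- basic positivity facts
  have hεN : (0:ℝ) < δ * N := lt_of_lt_of_le (Real.exp_pos 1) hcard
  have hNpos : (0:ℝ) < N := by nlinarith
  have hlog1 : 1 ≤ Real.log (δ * N) := (Real.le_log_iff_exp_le hεN).mpr hcard
  set m : ℕ := ⌈Real.log (δ * N) / δ⌉₊ with hmdef
  have hmge : Real.log (δ * N) / δ ≤ m := Nat.le_ceil _
  have hmle : (m : ℝ) ≤ Real.log (δ * N) / δ + 1 :=
    (Nat.ceil_lt_add_one (by positivity)).le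
  obtain ⟨P₀, t, hP₀c, hP₀card, hts, htcard, hpierce⟩ :=
    greedy hδ (by linarith) s hsmem m
  -- decay bound
  have hdecay : (1 - δ)^m * (s.card : ℝ) ≤ 1 / δ := by
    have h1 : (1 - δ : ℝ) ≤ Real.exp (-δ) := by
      have := Real.add_one_le_exp (-δ); linarith
    have h0 : (0:ℝ) ≤ 1 - δ := by linarith
    have h2 : (1 - δ:ℝ)^m ≤ Real.exp (-δ) ^ m := pow_le_pow_left₀ h0 h1 m
    have h3 : Real.exp (-δ) ^ m = Real.exp (-(δ * m)) := by
      rw [← Real.exp_nat_mul]; ring_nf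
    have h4 : Real.exp (-(δ * m)) ≤ Real.exp (-Real.log (δ * N)) := by
      apply Real.exp_le_exp.mpr
      have : Real.log (δ * N) ≤ δ * m := by
        rw [div_le_iff₀ hδ] at hmge; linarith
      linarith
    have h5 : Real.exp (-Real.log (δ * N)) = (δ * N)⁻¹ := by
      rw [Real.exp_neg, Real.exp_log hεN]
    have h6 : (1 - δ:ℝ)^m ≤ (δ * N)⁻¹ := by
      rw [← h5]; exact h2.trans (h3 ▸ h4)
    calc (1 - δ)^m * (s.card : ℝ) ≤ (δ * N)⁻¹ * N := by
          apply mul_le_mul h6 hscard (by positivity) (by positivity)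
      _ = 1 / δ := by field_simp
  -- pick a point in each remaining box
  have htne : ∀ B ∈ t, B.Nonempty := by
    intro B hB
    rcases Set.eq_empty_or_nonempty B with rfl | h
    · exfalso
      have := (hsmem _ (hts hB)).2
      rw [vol] at this; simp at this; linarith
    · exact h
  set g : Set (Fin d → ℝ) → (Fin d → ℝ) :=
    fun B => if h : B.Nonempty then h.choose else fun _ => 0 with hgdef
  have hg : ∀ B ∈ t, g B ∈ B := by
    intro B hB
    rw [hgdef]
    simp only [dif_pos (htne B hB)]
    exact (htne B hB).choose_spec
  refine ⟨P₀ ∪ t.image g, ?_, ?_, ?_⟩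
  · rw [Finset.coe_union]
    refine Set.union_subset hP₀c ?_
    rw [Finset.coe_image]
    rintro x ⟨B, hB, rfl⟩
    rw [Finset.mem_coe] at hB
    exact isBox_subset_cube (hsmem _ (hts hB)).1 (hg B hB)
  · -- cardinality bound
    have hcardle : ((P₀ ∪ t.image g).card : ℝ) ≤ (m : ℝ) + t.card := by
      have := (Finset.card_union_le P₀ (t.image g)).trans
        (Nat.add_le_add hP₀card (Finset.card_image_le))
      exact_mod_cast this
    have hlog4 : Real.log (4 * δ * N) = Real.log 4 + Real.log (δ * N) := by
      rw [mul_assoc, Real.log_mul (by norm_num) (ne_of_gt hεN)]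
    have hlog2 : (0.6931471803 : ℝ) < Real.log 2 := Real.log_two_gt_d9
    have hlog4' : Real.log 4 = 2 * Real.log 2 := by
      rw [show (4:ℝ) = 2^2 by norm_num, Real.log_pow]; push_cast; ring
    calc ((P₀ ∪ t.image g).card : ℝ) ≤ (m : ℝ) + t.card := hcardle
      _ ≤ (Real.log (δ * N) / δ + 1) + 1 / δ := by
          have := htcard.trans hdecay; linarith
      _ = (Real.log (δ * ↑N) + δ + 1) / δ := by field_simp
      _ ≤ Real.log (4 * δ * N) / δ := by
          rw [hlog4, hlog4', div_le_div_iff₀ hδ hδ]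
          nlinarith [hlog2, hδ3, hδ.le]
  · -- dispersion bound
    have hpierceAll : ∀ B ∈ s, (B ∩ ↑(P₀ ∪ t.image g)).Nonempty := by
      intro B hB
      by_cases ht : B ∈ t
      · refine ⟨g B, hg B ht, ?_⟩
        rw [Finset.coe_union, Finset.coe_image]
        exact Or.inr ⟨B, ht, rfl⟩
      · obtain ⟨y, hy1, hy2⟩ := hpierce B hB ht
        refine ⟨y, hy1, ?_⟩
        rw [Finset.coe_union]
        exact Or.inl hy2
    rw [disp]
    apply Real.sSup_le
    · rintro v ⟨B, hB, hBP, rfl⟩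
      by_contra hcon
      push_neg at hcon
      obtain ⟨B₀, hB₀𝒩, hsub, hδB₀⟩ := happ.2 B hB hcon.le
      have hB₀s : B₀ ∈ s := by
        rw [hsdef, Finset.mem_filter, Set.Finite.mem_toFinset]
        exact ⟨hB₀𝒩, hδB₀⟩
      obtain ⟨y, hy1, hy2⟩ := hpierceAll B₀ hB₀s
      have : y ∈ B ∩ ↑(P₀ ∪ t.image g) := ⟨hsub hy1, hy2⟩
      rw [hBP] at this
      exact this
    · linarith
end
end

section
/- Let d ≥ 1 be an integer, δ ∈ (0,1), let N be a finite collection of measurable subsets of [0,1]^d each of Lebesgue measure at least δ, and let M be a positive integer with M ≥ ln(δ·|N|)/δ (e.g. M = ⌈ln(δ·|N|)/δ⌉, assuming δ·|N| ≥ e). Then there exists a finite set P ⊆ [0,1]^d with |P| ≤ M + |N|·(1−δ)^M such that every A ∈ N satisfies A ∩ P ≠ ∅. -/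
open MeasureTheory Real Set ProbabilityTheory

noncomputable section

open scoped ENNReal

lemma cube_volume (d : ℕ) : volume (cube d) = 1 := by
  rw [cube, volume_pi_pi]; simp [Real.volume_Icc]

lemma cube_measurable (d : ℕ) : MeasurableSet (cube d) :=
  MeasurableSet.univ_pi fun _ => measurableSet_Icc

open Classical in
lemma exists_heavy_point (d : ℕ) (δ : ℝ) (hδ0 : 0 < δ)
    (S : Finset (Set (Fin d → ℝ))) (hS : S.Nonempty)
    (hmeas : ∀ A ∈ S, MeasurableSet A) (hsub : ∀ A ∈ S, A ⊆ cube d)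
    (hvol : ∀ A ∈ S, δ ≤ vol A) :
    ∃ x ∈ cube d, δ * S.card ≤ ((S.filter (fun A => x ∈ A)).card : ℝ) := by
  by_contra hcon
  push_neg at hcon
  set t : ℝ := δ * S.card with ht
  have htpos : 0 < t := mul_pos hδ0 (by exact_mod_cast Finset.card_pos.mpr hS)
  set c : ℕ := ⌈t⌉₊ - 1 with hc
  have hceil : 1 ≤ ⌈t⌉₊ := Nat.one_le_iff_ne_zero.mpr (by positivity)
  have hclt : (c : ℝ) < t := by
    have h1 : (⌈t⌉₊ : ℝ) < t + 1 := Nat.ceil_lt_add_one htpos.le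
    have : (c : ℝ) = (⌈t⌉₊ : ℝ) - 1 := by
      rw [hc, Nat.cast_sub hceil, Nat.cast_one]
    linarith
  set f : (Fin d → ℝ) → ℝ≥0∞ := fun x => ∑ A ∈ S, A.indicator (fun _ => (1:ℝ≥0∞)) x with hf
  have hfx : ∀ x, f x = ((S.filter (fun A => x ∈ A)).card : ℝ≥0∞) := by
    intro x
    simp [hf, Set.indicator_apply, Finset.sum_boole]
  have hint : ∫⁻ x, f x = ∑ A ∈ S, volume A := by
    rw [hf, lintegral_finset_sum]
    · refine Finset.sum_congr rfl fun A hA => ?_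
      exact lintegral_indicator_one (hmeas A hA)
    · exact fun A hA => measurable_const.indicator (hmeas A hA)
  have hvolA : ∀ A ∈ S, ENNReal.ofReal δ ≤ volume A := by
    intro A hA
    exact ENNReal.ofReal_le_of_le_toReal (hvol A hA)
  have hlow : ENNReal.ofReal t ≤ ∫⁻ x, f x := by
    rw [hint]
    calc ENNReal.ofReal t = ∑ _A ∈ S, ENNReal.ofReal δ := by
          rw [Finset.sum_const, ht, ENNReal.ofReal_mul hδ0.le, nsmul_eq_mul, mul_comm]
          congr 1
          simp [ENNReal.ofReal_natCast]
      _ ≤ ∑ A ∈ S, volume A := Finset.sum_le_sum hvolA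
  have hbound : ∀ x, f x ≤ (cube d).indicator (fun _ => (c : ℝ≥0∞)) x := by
    intro x
    by_cases hx : x ∈ cube d
    · rw [Set.indicator_of_mem hx, hfx]
      have hlt := hcon x hx
      have : (S.filter (fun A => x ∈ A)).card ≤ c := by
        have : (S.filter (fun A => x ∈ A)).card < ⌈t⌉₊ := by
          rw [Nat.lt_ceil]; exact hlt
        omega
      exact_mod_cast this
    · rw [Set.indicator_of_notMem hx, hfx]
      have : S.filter (fun A => x ∈ A) = ∅ := by
        apply Finset.filter_eq_empty_iff.mpr
        intro A hA hxA
        exact hx (hsub A hA hxA)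
      simp [this]
  have hup : ∫⁻ x, f x ≤ (c : ℝ≥0∞) := by
    calc ∫⁻ x, f x ≤ ∫⁻ x, (cube d).indicator (fun _ => (c : ℝ≥0∞)) x :=
          lintegral_mono hbound
      _ = (c : ℝ≥0∞) * volume (cube d) := lintegral_indicator_const (cube_measurable d) _
      _ = c := by rw [cube_volume, mul_one]
  have : ENNReal.ofReal t ≤ (c : ℝ≥0∞) := hlow.trans hup
  rw [← ENNReal.ofReal_natCast, ENNReal.ofReal_le_ofReal_iff (by positivity)] at this
  linarith

open Classical in
lemma greedy_piercing (d : ℕ) (δ : ℝ) (hδ : δ ∈ Set.Ioo (0:ℝ) 1)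
    (S : Finset (Set (Fin d → ℝ)))
    (hmeas : ∀ A ∈ S, MeasurableSet A) (hsub : ∀ A ∈ S, A ⊆ cube d)
    (hvol : ∀ A ∈ S, δ ≤ vol A) (k : ℕ) :
    ∃ P : Finset (Fin d → ℝ), ∃ T : Finset (Set (Fin d → ℝ)), T ⊆ S ∧
      ↑P ⊆ cube d ∧ P.card ≤ k ∧ ((T.card : ℝ) ≤ (S.card : ℝ) * (1 - δ)^k) ∧
      ∀ A ∈ S, A ∉ T → (A ∩ (↑P : Set (Fin d → ℝ))).Nonempty := by
  induction k with
  | zero =>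
    exact ⟨∅, S, subset_rfl, by simp, by simp, by simp, fun A hA hA' => absurd hA hA'⟩
  | succ k ih =>
    obtain ⟨P, T, hTS, hPc, hPcard, hTcard, hpierce⟩ := ih
    have h1δ : (0:ℝ) ≤ 1 - δ := by linarith [hδ.2]
    rcases T.eq_empty_or_nonempty with rfl | hT
    · refine ⟨P, ∅, Finset.empty_subset _, hPc, hPcard.trans (Nat.le_succ k), ?_, ?_⟩
      · simp; positivity
      · intro A hA _; exact hpierce A hA (Finset.notMem_empty A)
    · obtain ⟨x, hx, hheavy⟩ := exists_heavy_point d δ hδ.1 T hT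
        (fun A hA => hmeas A (hTS hA)) (fun A hA => hsub A (hTS hA))
        (fun A hA => hvol A (hTS hA))
      refine ⟨insert x P, T.filter (fun A => x ∉ A), (Finset.filter_subset _ _).trans hTS,
        ?_, ?_, ?_, ?_⟩
      · rw [Finset.coe_insert]
        exact Set.insert_subset hx hPc
      · exact (Finset.card_insert_le _ _).trans (Nat.succ_le_succ hPcard)
      · have hsplit : (T.filter (fun A => x ∈ A)).card + (T.filter (fun A => x ∉ A)).card
            = T.card := Finset.card_filter_add_card_filter_not _
        have h2 : ((T.filter (fun A => x ∉ A)).card : ℝ) ≤ (1 - δ) * T.card := by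
          have := hheavy
          have hc : ((T.filter (fun A => x ∉ A)).card : ℝ)
              = (T.card : ℝ) - ((T.filter (fun A => x ∈ A)).card : ℝ) := by
            have := hsplit
            push_cast [← this]
            ring
          rw [hc]; nlinarith
        calc ((T.filter (fun A => x ∉ A)).card : ℝ) ≤ (1 - δ) * T.card := h2
          _ ≤ (1 - δ) * ((S.card : ℝ) * (1 - δ)^k) := by
              exact mul_le_mul_of_nonneg_left hTcard h1δ
          _ = (S.card : ℝ) * (1 - δ)^(k+1) := by ring
      · intro A hA hAf
        by_cases hAT : A ∈ T
        · have hxA : x ∈ A := by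
            by_contra hxA
            exact hAf (Finset.mem_filter.mpr ⟨hAT, hxA⟩)
          exact ⟨x, hxA, Finset.mem_insert_self x P⟩
        · obtain ⟨y, hy1, hy2⟩ := hpierce A hA hAT
          exact ⟨y, hy1, by simp [Finset.mem_insert]; right; exact_mod_cast hy2⟩

/-- Piercing set from a good realization: for any finite family `𝒩` of measurable subsets of
`[0,1]^d`, each of measure at least `δ`, and any positive integer `M ≥ ln(δ|𝒩|)/δ`, there is
a finite `P ⊆ [0,1]^d` with `|P| ≤ M + |𝒩|(1-δ)^M` meeting every member of `𝒩`. -/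
theorem exists_piercing_set (d : ℕ) (hd : 1 ≤ d) (δ : ℝ) (hδ : δ ∈ Set.Ioo (0 : ℝ) 1)
    (𝒩 : Set (Set (Fin d → ℝ))) (hfin : 𝒩.Finite)
    (hmeas : ∀ A ∈ 𝒩, MeasurableSet A) (hsub : ∀ A ∈ 𝒩, A ⊆ cube d)
    (hvol : ∀ A ∈ 𝒩, δ ≤ vol A) (M : ℕ) (hM : 0 < M)
    (hMlb : Real.log (δ * 𝒩.ncard) / δ ≤ (M : ℝ)) :
    ∃ P : Finset (Fin d → ℝ), ↑P ⊆ cube d ∧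
      (P.card : ℝ) ≤ (M : ℝ) + (𝒩.ncard : ℝ) * (1 - δ) ^ M ∧
      ∀ A ∈ 𝒩, (A ∩ ↑P).Nonempty := by
  classical
  set S : Finset (Set (Fin d → ℝ)) := hfin.toFinset with hSdef
  have hmemS : ∀ A, A ∈ S ↔ A ∈ 𝒩 := fun A => hfin.mem_toFinset
  have hcardS : (S.card : ℝ) = (𝒩.ncard : ℝ) := by
    congr 1
    exact (Set.ncard_eq_toFinset_card 𝒩 hfin).symm
  obtain ⟨P, T, hTS, hPc, hPcard, hTcard, hpierce⟩ :=
    greedy_piercing d δ hδ S (fun A hA => hmeas A ((hmemS A).mp hA))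
      (fun A hA => hsub A ((hmemS A).mp hA)) (fun A hA => hvol A ((hmemS A).mp hA)) M
  -- each set in T is nonempty
  have hne : ∀ A ∈ T, A.Nonempty := by
    intro A hA
    rw [Set.nonempty_iff_ne_empty]
    rintro rfl
    have := hvol ∅ ((hmemS ∅).mp (hTS hA))
    simp [vol] at this
    linarith [hδ.1]
  set pick : Set (Fin d → ℝ) → (Fin d → ℝ) :=
    fun A => if h : A.Nonempty then h.some else fun _ => 0 with hpick
  have hpickmem : ∀ A ∈ T, pick A ∈ A := by
    intro A hA
    rw [hpick]
    simp only [dif_pos (hne A hA)]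
    exact (hne A hA).some_mem
  refine ⟨P ∪ T.image pick, ?_, ?_, ?_⟩
  · rw [Finset.coe_union]
    apply Set.union_subset hPc
    intro x hxm
    simp only [Finset.coe_image, Set.mem_image, Finset.mem_coe] at hxm
    obtain ⟨A, hA, rfl⟩ := hxm
    exact hsub A ((hmemS A).mp (hTS hA)) (hpickmem A hA)
  · calc ((P ∪ T.image pick).card : ℝ) ≤ (P.card : ℝ) + ((T.image pick).card : ℝ) := by
          exact_mod_cast Finset.card_union_le _ _
      _ ≤ (M : ℝ) + (T.card : ℝ) := by
          have h1 : (P.card : ℝ) ≤ M := by exact_mod_cast hPcard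
          have h2 : ((T.image pick).card : ℝ) ≤ T.card := by
            exact_mod_cast Finset.card_image_le
          linarith
      _ ≤ (M : ℝ) + (𝒩.ncard : ℝ) * (1 - δ) ^ M := by rw [← hcardS]; linarith
  · intro A hA
    by_cases hAT : A ∈ T
    · exact ⟨pick A, hpickmem A hAT, by
        simp only [Finset.coe_union, Set.mem_union, Finset.mem_coe]
        right
        exact Finset.mem_image_of_mem pick hAT⟩
    · obtain ⟨y, hy1, hy2⟩ := hpierce A ((hmemS A).mpr hA) hAT
      exact ⟨y, hy1, by
        simp only [Finset.coe_union, Set.mem_union]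
        left; exact hy2⟩
end
end
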